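/- arXiv:math/0503222 — 3 statements merged into one kernel-verified Lean document; each statement's English description precedes it below -/
import Mathlib

section
/- Let p + q = 1, 0 < q < 1, ρ ∈ (1, 1/p], and suppose (ε_k) satisfies Σ ε_k = 0, |ε_k| ≤ δ ρ^{-k}, with 2δ(1+ρ)/(ρ-1)^2 ≤ 1/6. Set F(ξ) = qξ/(1-pξ) + Σ_k ε_k ξ^k. Then for all complex ξ with |ξ| ≤ (1+ρ)/2, |(F(ξ) - 1)/(ξ - 1)| ≥ 1/3. -/
/-!
Since `∑ εₖ = 0` and `ξ^(k+1) = (ξ - 1)(1 + ξ + ⋯ + ξ^k) + 1`, the perturbation factors as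
`∑ εₖ ξ^(k+1) = (ξ - 1) T` with `T = ∑ εₖ (1 + ξ + ⋯ + ξ^k)`. On `‖ξ‖ ≤ r` the partial geometric
sums are at most `r^(k+1)/(r - 1)`, so `‖T‖ ≤ δ r / ((r - 1)(ρ - r))`, which for `r = (1 + ρ)/2`
is `2δ(1 + ρ)/(ρ - 1)² ≤ 1/6`. As `p + q = 1`, the geometric part contributes `(1 - pξ)⁻¹`,
of norm at least `1/2` because `‖pξ‖ < 1`.
-/

open Finset

section

variable {𝕜 : Type*} [NormedField 𝕜]

theorem norm_geom_sum_le_pow_div {ξ : 𝕜} {r : ℝ} (hξ : ‖ξ‖ ≤ r) (hr : 1 < r) (n : ℕ) :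
    ‖∑ j ∈ range n, ξ ^ j‖ ≤ r ^ n / (r - 1) :=
  calc ‖∑ j ∈ range n, ξ ^ j‖ ≤ ∑ j ∈ range n, r ^ j := by
        refine (norm_sum_le _ _).trans (sum_le_sum fun j _ => ?_)
        rw [norm_pow]
        exact pow_le_pow_left₀ (norm_nonneg ξ) hξ j
    _ = (r ^ n - 1) / (r - 1) := geom_sum_eq hr.ne' n
    _ ≤ r ^ n / (r - 1) := by gcongr; linarith

variable {a : ℕ → 𝕜} {δ ρ : ℝ}

theorem summable_of_norm_le_div_pow [CompleteSpace 𝕜] (ha : ∀ k, ‖a k‖ ≤ δ / ρ ^ (k + 1))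
    (hρ : 1 < ρ) : Summable a := by
  have hgeo := (summable_geometric_of_lt_one (by positivity) (inv_lt_one_of_one_lt₀ hρ)).mul_left
    (δ / ρ)
  refine hgeo.of_norm_bounded fun k => (ha k).trans_eq ?_
  rw [inv_pow, pow_succ]
  field_simp

theorem hasSum_mul_pow_succ_of_hasSum_eq_zero {ξ T : 𝕜} (ha : HasSum a 0)
    (hT : HasSum (fun k => a k * ∑ j ∈ range (k + 1), ξ ^ j) T) :
    HasSum (fun k => a k * ξ ^ (k + 1)) ((ξ - 1) * T) := by
  have h := (hT.mul_left (ξ - 1)).add ha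
  rw [add_zero] at h
  refine h.congr_fun fun k => ?_
  rw [mul_left_comm, mul_geom_sum]
  ring

variable {r : ℝ} {ξ : 𝕜}

theorem norm_mul_geom_sum_le (ha : ∀ k, ‖a k‖ ≤ δ / ρ ^ (k + 1)) (hξ : ‖ξ‖ ≤ r) (hr : 1 < r)
    (hρ : 0 < ρ) (k : ℕ) :
    ‖a k * ∑ j ∈ range (k + 1), ξ ^ j‖ ≤ δ * r / ((r - 1) * ρ) * (r / ρ) ^ k := by
  have hδ : 0 ≤ δ / ρ ^ (k + 1) := (norm_nonneg _).trans (ha k)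
  calc ‖a k * ∑ j ∈ range (k + 1), ξ ^ j‖
      ≤ δ / ρ ^ (k + 1) * (r ^ (k + 1) / (r - 1)) := by
        rw [norm_mul]
        exact mul_le_mul (ha k) (norm_geom_sum_le_pow_div hξ hr _) (norm_nonneg _) hδ
    _ = δ * r / ((r - 1) * ρ) * (r / ρ) ^ k := by
        rw [div_pow, pow_succ, pow_succ]
        field_simp

theorem exists_hasSum_mul_geom_sum_norm_le [CompleteSpace 𝕜]
    (ha : ∀ k, ‖a k‖ ≤ δ / ρ ^ (k + 1)) (hξ : ‖ξ‖ ≤ r) (hr : 1 < r) (hrρ : r < ρ) :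
    ∃ T, HasSum (fun k => a k * ∑ j ∈ range (k + 1), ξ ^ j) T ∧
      ‖T‖ ≤ δ * r / ((r - 1) * (ρ - r)) := by
  have hρ : 0 < ρ := by linarith
  have hgeo := (hasSum_geometric_of_lt_one (by positivity) ((div_lt_one hρ).2 hrρ)).mul_left
    (δ * r / ((r - 1) * ρ))
  have hbound := norm_mul_geom_sum_le ha hξ hr hρ
  refine ⟨_, (hgeo.summable.of_norm_bounded hbound).hasSum,
    (tsum_of_norm_bounded hgeo hbound).trans_eq ?_⟩
  have : ρ - r ≠ 0 := by linarith
  field_simp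

theorem one_half_le_norm_inv_one_sub {z : 𝕜} (hz : ‖z‖ < 1) :
    1 / 2 ≤ ‖(1 - z)⁻¹‖ := by
  have hpos : 0 < ‖1 - z‖ := by
    linarith [norm_sub_norm_le (1 : 𝕜) z, norm_one (α := 𝕜)]
  have hle : ‖1 - z‖ ≤ 2 := by
    linarith [norm_sub_le (1 : 𝕜) z, norm_one (α := 𝕜)]
  rw [norm_inv, one_div]
  exact inv_anti₀ hpos hle

end

theorem denominator_lower_bound_general
    (p q δ ρ : ℝ) (hpq : p + q = 1)
    (hρ1 : 1 < ρ) (hρp : ρ ≤ 1 / p)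
    (hsmall : 2 * δ * (1 + ρ) / (ρ - 1) ^ 2 ≤ 1 / 6)
    (ε : ℕ → ℝ) (hε : ∀ k : ℕ, |ε (k + 1)| ≤ δ / ρ ^ (k + 1))
    (hsum : ∑' k : ℕ, ε (k + 1) = 0)
    (F : ℂ → ℂ)
    (hF : ∀ ξ : ℂ, F ξ = (q : ℂ) * ξ / (1 - (p : ℂ) * ξ)
            + ∑' k : ℕ, (ε (k + 1) : ℂ) * ξ ^ (k + 1)) :
    ∀ ξ : ℂ, ‖ξ‖ ≤ (1 + ρ) / 2 → ξ ≠ 1 →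
      (1 : ℝ) / 3 ≤ ‖(F ξ - 1) / (ξ - 1)‖ := by
  intro ξ hξ hξ1
  have hp : 0 < p := by
    by_contra! hp
    linarith [div_nonpos_of_nonneg_of_nonpos zero_le_one hp]
  have ha : ∀ k, ‖(ε (k + 1) : ℂ)‖ ≤ δ / ρ ^ (k + 1) := by simpa using hε
  have ha0 : HasSum (fun k => (ε (k + 1) : ℂ)) 0 := by
    simpa [← Complex.ofReal_tsum, hsum] using (summable_of_norm_le_div_pow ha hρ1).hasSum
  obtain ⟨T, hT, hTnorm⟩ := exists_hasSum_mul_geom_sum_norm_le ha hξ (by linarith) (by linarith)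
  have hT6 : ‖T‖ ≤ 1 / 6 := by
    refine hTnorm.trans (le_of_eq_of_le ?_ hsmall)
    rw [show (1 + ρ) / 2 - 1 = (ρ - 1) / 2 by ring, show ρ - (1 + ρ) / 2 = (ρ - 1) / 2 by ring]
    field_simp
  have hpξ : ‖(p : ℂ) * ξ‖ < 1 := by
    rw [norm_mul, Complex.norm_real, Real.norm_of_nonneg hp.le]
    calc p * ‖ξ‖ ≤ p * ((1 + ρ) / 2) := by gcongr
      _ < p * ρ := by gcongr; linarith
      _ ≤ 1 := by rwa [le_div_iff₀ hp, mul_comm] at hρp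
  have hden : 1 - (p : ℂ) * ξ ≠ 0 := sub_ne_zero.mpr fun h => by simp [← h] at hpξ
  have key : (F ξ - 1) / (ξ - 1) = (1 - (p : ℂ) * ξ)⁻¹ + T := by
    have hq : (q : ℂ) = 1 - p := by rw [eq_sub_iff_add_eq, add_comm]; exact_mod_cast hpq
    rw [hF, (hasSum_mul_pow_succ_of_hasSum_eq_zero ha0 hT).tsum_eq, hq]
    field_simp [sub_ne_zero.mpr hξ1]
    ring
  rw [key]
  linarith [norm_le_add_norm_add (1 - (p : ℂ) * ξ)⁻¹ T, one_half_le_norm_inv_one_sub hpξ]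

theorem denominator_lower_bound
    (p q δ ρ : ℝ) (hpq : p + q = 1) (hq0 : 0 < q) (hq1 : q < 1)
    (hρ1 : 1 < ρ) (hρp : ρ ≤ 1 / p) (hδ : 0 ≤ δ)
    (hsmall : 2 * δ * (1 + ρ) / (ρ - 1) ^ 2 ≤ 1 / 6)
    (ε : ℕ → ℝ) (hε : ∀ k : ℕ, |ε (k + 1)| ≤ δ / ρ ^ (k + 1))
    (hsum : ∑' k : ℕ, ε (k + 1) = 0)
    (F : ℂ → ℂ)
    (hF : ∀ ξ : ℂ, F ξ = (q : ℂ) * ξ / (1 - (p : ℂ) * ξ)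
            + ∑' k : ℕ, (ε (k + 1) : ℂ) * ξ ^ (k + 1)) :
    ∀ ξ : ℂ, ‖ξ‖ ≤ (1 + ρ) / 2 → ξ ≠ 1 →
      (1 : ℝ) / 3 ≤ ‖(F ξ - 1) / (ξ - 1)‖ :=
  denominator_lower_bound_general p q δ ρ hpq hρ1 hρp hsmall ε hε hsum F hF
end

section
/- Let E(ξ) = Σ_{k≥1} ε_k ξ^k with Σ ε_k = 0, |ε_k| ≤ δ ρ^{-k}, ρ > 1. Then with η = (ρ-1)/2 and R = (1+ρ)/2, for all |ξ| ≤ R one has |(E(ξ) - (ξ-1)E'(1))/(ξ-1)^2| ≤ 2δρ/(ρ-1)^3. -/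
/-!
Because `∑ ε_k = 0`, the numerator is `∑ ε_k (ξ^k - 1 - k(ξ - 1)) = (ξ - 1)² ∑ ε_k Q_k(ξ)`, where
`Q_k(ξ) = ∑_{i < j < k} ξ^i` has nonnegative coefficients. Hence `|Q_k(ξ)| ≤ Q_k(R)` for `|ξ| ≤ R`,
and the majorant `∑ δ ρ^{-k} Q_k(R)` sums in closed form to `δ y² / ((1 - y)² (1 - R y))` with
`y = ρ⁻¹`, which is `2δρ/(ρ - 1)³` at `R = (1 + ρ)/2`.
-/

open Finset

def doubleGeomSum {α : Type*} [Semiring α] (z : α) (k : ℕ) : α :=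
  ∑ j ∈ range k, ∑ i ∈ range j, z ^ i

theorem sub_one_sq_mul_doubleGeomSum {α : Type*} [CommRing α] (z : α) (k : ℕ) :
    (z - 1) ^ 2 * doubleGeomSum z k = z ^ k - 1 - k * (z - 1) := by
  have h : doubleGeomSum z k * (z - 1) = (∑ j ∈ range k, z ^ j) - k := by
    rw [doubleGeomSum, Finset.sum_mul]
    simp only [geom_sum_mul, sum_sub_distrib, sum_const, card_range, nsmul_one]
  calc (z - 1) ^ 2 * doubleGeomSum z k = (doubleGeomSum z k * (z - 1)) * (z - 1) := by ring
    _ = z ^ k - 1 - k * (z - 1) := by rw [h, sub_mul, geom_sum_mul]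

theorem norm_doubleGeomSum_le {α : Type*} [NormedDivisionRing α] {z : α} {r : ℝ}
    (hz : ‖z‖ ≤ r) (k : ℕ) : ‖doubleGeomSum z k‖ ≤ doubleGeomSum r k := by
  unfold doubleGeomSum
  refine (norm_sum_le _ _).trans (sum_le_sum fun j _ => (norm_sum_le _ _).trans ?_)
  exact sum_le_sum fun i _ => by
    rw [norm_pow]; exact pow_le_pow_left₀ (norm_nonneg _) hz i

theorem hasSum_pow_mul_doubleGeomSum {𝕜 : Type*} [NormedField 𝕜] [CompleteSpace 𝕜]
    {y r : 𝕜} (hy : ‖y‖ < 1) (hry : ‖r * y‖ < 1) (hr : r ≠ 1) :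
    HasSum (fun k => y ^ k * doubleGeomSum r k) (y ^ 2 / ((1 - y) ^ 2 * (1 - r * y))) := by
  have hr1 : r - 1 ≠ 0 := sub_ne_zero.mpr hr
  have hy1 : 1 - y ≠ 0 := sub_ne_zero.mpr fun h => by simp [← h] at hy
  have hry1 : 1 - y * r ≠ 0 := mul_comm r y ▸ sub_ne_zero.mpr fun h => by simp [← h] at hry
  have hclosed := (((hasSum_geometric_of_norm_lt_one hry).sub
    (hasSum_geometric_of_norm_lt_one hy)).sub
    ((hasSum_coe_mul_geometric_of_norm_lt_one hy).mul_left (r - 1))).mul_left ((r - 1) ^ 2)⁻¹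
  have hterm : ∀ k : ℕ, y ^ k * doubleGeomSum r k
      = ((r - 1) ^ 2)⁻¹ * ((r * y) ^ k - y ^ k - (r - 1) * (k * y ^ k)) := fun k => by
    rw [eq_inv_mul_iff_mul_eq₀ (pow_ne_zero 2 hr1), mul_left_comm, sub_one_sq_mul_doubleGeomSum]
    ring
  have hvalue : y ^ 2 / ((1 - y) ^ 2 * (1 - r * y))
      = ((r - 1) ^ 2)⁻¹ * ((1 - r * y)⁻¹ - (1 - y)⁻¹ - (r - 1) * (y / (1 - y) ^ 2)) := by
    field_simp
    ring
  rw [hvalue, funext hterm]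
  exact hclosed

theorem tsum_mul_pow_succ_sub_eq_sub_one_sq_mul {𝕜 : Type*} [Field 𝕜] [TopologicalSpace 𝕜]
    [IsTopologicalRing 𝕜] [T2Space 𝕜] {a : ℕ → 𝕜} {ξ : 𝕜} (ha : Summable a)
    (haξ : Summable fun k => a k * ξ ^ (k + 1))
    (ha' : Summable fun k => ((k + 1 : ℕ) : 𝕜) * a k) (hsum : ∑' k, a k = 0) :
    ∑' k, a k * ξ ^ (k + 1) - (ξ - 1) * ∑' k, ((k + 1 : ℕ) : 𝕜) * a k
      = (ξ - 1) ^ 2 * ∑' k, a k * doubleGeomSum ξ (k + 1) := by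
  rw [← tsum_mul_left, ← tsum_mul_left, ← sub_zero (∑' k, a k * ξ ^ (k + 1)), ← hsum,
    ← haξ.tsum_sub ha, ← (haξ.sub ha).tsum_sub (ha'.mul_left _)]
  congr 1
  funext k
  rw [mul_left_comm ((ξ - 1) ^ 2), sub_one_sq_mul_doubleGeomSum]
  push_cast
  ring

section GeometricDecay

variable {𝕜 : Type*} [RCLike 𝕜] {a : ℕ → 𝕜} {C y : ℝ}

theorem summable_mul_pow_succ_of_norm_le_geometric (ha : ∀ k, ‖a k‖ ≤ C * y ^ (k + 1))
    (hy : 0 ≤ y) {ξ : 𝕜} (hξ : ‖ξ‖ * y < 1) : Summable fun k => a k * ξ ^ (k + 1) := by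
  refine .of_norm_bounded
    ((summable_geometric_of_lt_one (by positivity) hξ).mul_left (C * (‖ξ‖ * y))) fun k => ?_
  calc ‖a k * ξ ^ (k + 1)‖ ≤ C * y ^ (k + 1) * ‖ξ‖ ^ (k + 1) := by
        rw [norm_mul, norm_pow]; gcongr; exact ha k
    _ = C * (‖ξ‖ * y) * (‖ξ‖ * y) ^ k := by ring

theorem summable_of_norm_le_geometric (ha : ∀ k, ‖a k‖ ≤ C * y ^ (k + 1)) (hy : 0 ≤ y)
    (hy1 : y < 1) : Summable a := by
  simpa using summable_mul_pow_succ_of_norm_le_geometric ha hy (ξ := (1 : 𝕜)) (by simpa using hy1)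

theorem summable_natCast_succ_mul_of_norm_le_geometric (ha : ∀ k, ‖a k‖ ≤ C * y ^ (k + 1))
    (hy : 0 ≤ y) (hy1 : y < 1) : Summable fun k => ((k + 1 : ℕ) : 𝕜) * a k := by
  have hgeom := (summable_nat_add_iff 1).mpr
    ((summable_pow_mul_geometric_of_norm_lt_one 1 (by rwa [Real.norm_of_nonneg hy])).mul_left C)
  refine .of_norm_bounded hgeom fun k => ?_
  rw [norm_mul, RCLike.norm_natCast]
  calc ((k + 1 : ℕ) : ℝ) * ‖a k‖ ≤ ((k + 1 : ℕ) : ℝ) * (C * y ^ (k + 1)) := by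
        gcongr; exact ha k
    _ = C * (((k + 1 : ℕ) : ℝ) ^ 1 * y ^ (k + 1)) := by ring

theorem norm_tsum_mul_doubleGeomSum_le (ha : ∀ k, ‖a k‖ ≤ C * y ^ (k + 1)) (hy : 0 ≤ y)
    (hy1 : y < 1) {ξ : 𝕜} {R : ℝ} (hξ : ‖ξ‖ ≤ R) (hRy : R * y < 1) (hR : R ≠ 1) :
    ‖∑' k, a k * doubleGeomSum ξ (k + 1)‖ ≤ C * (y ^ 2 / ((1 - y) ^ 2 * (1 - R * y))) := by
  have hR0 : 0 ≤ R := (norm_nonneg ξ).trans hξ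
  have hsum := hasSum_pow_mul_doubleGeomSum (by rwa [Real.norm_of_nonneg hy])
    (by rwa [Real.norm_of_nonneg (by positivity)]) hR
  have hshift := (hasSum_nat_add_iff' 1).mpr hsum
  simp only [range_one, sum_singleton, doubleGeomSum, range_zero, sum_empty, mul_zero,
    sub_zero] at hshift
  refine tsum_of_norm_bounded (hshift.mul_left C) fun k => ?_
  rw [norm_mul, ← mul_assoc]
  exact mul_le_mul (ha k) (norm_doubleGeomSum_le hξ _) (norm_nonneg _)
    ((norm_nonneg _).trans (ha k))

end GeometricDecay

theorem numerator_upper_bound_general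
    (δ ρ : ℝ) (hρ : 1 < ρ)
    (ε : ℕ → ℝ) (hε : ∀ k : ℕ, |ε (k + 1)| ≤ δ / ρ ^ (k + 1))
    (hsum : ∑' k : ℕ, ε (k + 1) = 0)
    (E : ℂ → ℂ)
    (hE : ∀ ξ : ℂ, E ξ = ∑' k : ℕ, (ε (k + 1) : ℂ) * ξ ^ (k + 1))
    (E'one : ℂ) (hE' : E'one = ∑' k : ℕ, ((k + 1 : ℕ) : ℂ) * (ε (k + 1) : ℂ)) :
    ∀ ξ : ℂ, ‖ξ‖ ≤ (1 + ρ) / 2 → ξ ≠ 1 →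
      ‖(E ξ - (ξ - 1) * E'one) / (ξ - 1) ^ 2‖ ≤ 2 * δ * ρ / (ρ - 1) ^ 3 := by
  intro ξ hξ hξ1
  have hρ0 : 0 < ρ := one_pos.trans hρ
  have hy : 0 ≤ ρ⁻¹ := inv_nonneg.mpr hρ0.le
  have hy1 : ρ⁻¹ < 1 := inv_lt_one_of_one_lt₀ hρ
  have hRy : (1 + ρ) / 2 * ρ⁻¹ < 1 := by
    rw [← div_eq_mul_inv, div_lt_one hρ0]; linarith
  have hR : (1 + ρ) / 2 ≠ 1 := by linarith
  have ha : ∀ k, ‖(ε (k + 1) : ℂ)‖ ≤ δ * ρ⁻¹ ^ (k + 1) := fun k => by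
    rw [Complex.norm_real, Real.norm_eq_abs, inv_pow, ← div_eq_mul_inv]; exact hε k
  have hsumC : ∑' k, (ε (k + 1) : ℂ) = 0 := by exact_mod_cast hsum
  have hξy : ‖ξ‖ * ρ⁻¹ < 1 := (mul_le_mul_of_nonneg_right hξ hy).trans_lt hRy
  rw [hE, hE', tsum_mul_pow_succ_sub_eq_sub_one_sq_mul (summable_of_norm_le_geometric ha hy hy1)
    (summable_mul_pow_succ_of_norm_le_geometric ha hy hξy)
    (summable_natCast_succ_mul_of_norm_le_geometric ha hy hy1) hsumC,
    mul_div_cancel_left₀ _ (pow_ne_zero 2 (sub_ne_zero.mpr hξ1))]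
  calc _ ≤ δ * (ρ⁻¹ ^ 2 / ((1 - ρ⁻¹) ^ 2 * (1 - (1 + ρ) / 2 * ρ⁻¹))) :=
        norm_tsum_mul_doubleGeomSum_le ha hy hy1 hξ hRy hR
    _ = 2 * δ * ρ / (ρ - 1) ^ 3 := by
        have hρ1 : ρ - 1 ≠ 0 := by linarith
        rw [show 1 - ρ⁻¹ = (ρ - 1) / ρ by field_simp,
          show 1 - (1 + ρ) / 2 * ρ⁻¹ = (ρ - 1) / (2 * ρ) by field_simp; ring]
        field_simp

theorem numerator_upper_bound
    (δ ρ : ℝ) (hδ : 0 ≤ δ) (hρ : 1 < ρ)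
    (ε : ℕ → ℝ) (hε : ∀ k : ℕ, |ε (k + 1)| ≤ δ / ρ ^ (k + 1))
    (hsum : ∑' k : ℕ, ε (k + 1) = 0)
    (E : ℂ → ℂ)
    (hE : ∀ ξ : ℂ, E ξ = ∑' k : ℕ, (ε (k + 1) : ℂ) * ξ ^ (k + 1))
    (E'one : ℂ) (hE' : E'one = ∑' k : ℕ, ((k + 1 : ℕ) : ℂ) * (ε (k + 1) : ℂ)) :
    ∀ ξ : ℂ, ‖ξ‖ ≤ (1 + ρ) / 2 → ξ ≠ 1 →
      ‖(E ξ - (ξ - 1) * E'one) / (ξ - 1) ^ 2‖ ≤ 2 * δ * ρ / (ρ - 1) ^ 3 :=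
  numerator_upper_bound_general δ ρ hρ ε hε hsum E hE E'one hE'
end

section
/- Let (g_n) be the renewal sequence g_0 = 1, g_n = Σ_{k=1}^n f_k g_{n-k}, where f_k ≥ 0, Σ f_k = 1, and the mean m = Σ k f_k is finite with f_1 > 0. Then lim_{n→∞} g_n = 1/m. -/
/-!
Let `r k = ∑_{j > k} f j`. Summing the recursion gives the renewal identity
`∑_{k ≤ n} r k * g (n - k) = g 0`, and Abel summation gives `∑ r k = m`.

Let `c = limsup g` and `g ∘ φ → c`. In `g n = f 1 * g (n - 1) + ∑_{k ≥ 2} f k * g (n - k)` the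
second part is asymptotically at most `(1 - f 1) * c`, so `f 1 > 0` forces `g (φ i - 1) → c`, and
inductively `g (φ i - k) → c` for each `k`. Letting `i → ∞` and then truncating the renewal
identity at larger and larger `k` gives `c * m = g 0`. The recursion is linear, so the same
argument applied to `-g` identifies `liminf g` as well.
-/

open Filter Finset Topology

section Tail

variable {f : ℕ → ℝ}

noncomputable def renewalTail (f : ℕ → ℝ) (k : ℕ) : ℝ := ∑' i, f (i + k + 1)

lemma renewalTail_nonneg (hf0 : ∀ k, 0 ≤ f (k + 1)) (k : ℕ) : 0 ≤ renewalTail f k :=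
  tsum_nonneg fun i => hf0 (i + k)

lemma renewalTail_zero (hf : HasSum (fun k => f (k + 1)) 1) : renewalTail f 0 = 1 :=
  hf.tsum_eq

lemma renewalTail_succ (hs : Summable fun k => f (k + 1)) (k : ℕ) :
    renewalTail f (k + 1) = renewalTail f k - f (k + 1) := by
  rw [renewalTail, renewalTail, ((summable_nat_add_iff k).2 hs).tsum_eq_zero_add, zero_add,
    add_sub_cancel_left]
  exact tsum_congr fun i => by ring_nf

lemma tendsto_renewalTail (f : ℕ → ℝ) :
    Tendsto (renewalTail f) atTop (𝓝 0) :=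
  tendsto_sum_nat_add fun k => f (k + 1)

lemma sum_Ioc_add_renewalTail (hs : Summable fun k => f (k + 1)) {k n : ℕ} (hkn : k ≤ n) :
    ∑ j ∈ Ioc k n, f j + renewalTail f n = renewalTail f k := by
  induction n, hkn using Nat.le_induction with
  | base => simp
  | succ n hkn ih => rw [sum_Ioc_succ_top hkn, renewalTail_succ hs, ← ih]; ring

lemma sum_range_renewalTail (hs : Summable fun k => f (k + 1)) (n : ℕ) :
    ∑ k ∈ range n, renewalTail f k =
      n * renewalTail f n + ∑ k ∈ range n, ((k + 1 : ℕ) : ℝ) * f (k + 1) := by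
  induction n with
  | zero => simp
  | succ n ih =>
    rw [sum_range_succ, ih, sum_range_succ, renewalTail_succ hs]
    push_cast
    ring

lemma natCast_mul_renewalTail_le (hf0 : ∀ k, 0 ≤ f (k + 1)) (hs : Summable fun k => f (k + 1))
    (hmean : Summable fun k : ℕ => ((k + 1 : ℕ) : ℝ) * f (k + 1)) (n : ℕ) :
    n * renewalTail f n ≤ ∑' i, ((i + n + 1 : ℕ) : ℝ) * f (i + n + 1) := by
  rw [renewalTail, ← tsum_mul_left]
  refine Summable.tsum_le_tsum (fun i => ?_) (((summable_nat_add_iff n).2 hs).mul_left _)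
    ((summable_nat_add_iff n).2 hmean)
  exact mul_le_mul_of_nonneg_right (by push_cast; linarith [(i.cast_nonneg : (0 : ℝ) ≤ i)])
    (hf0 (i + n))

lemma hasSum_renewalTail (hf0 : ∀ k, 0 ≤ f (k + 1)) (hs : Summable fun k => f (k + 1))
    (hmean : Summable fun k : ℕ => ((k + 1 : ℕ) : ℝ) * f (k + 1)) :
    HasSum (renewalTail f) (∑' k : ℕ, ((k + 1 : ℕ) : ℝ) * f (k + 1)) := by
  rw [hasSum_iff_tendsto_nat_of_nonneg (renewalTail_nonneg hf0)]
  have hmul : Tendsto (fun n : ℕ => n * renewalTail f n) atTop (𝓝 0) :=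
    squeeze_zero (fun n => mul_nonneg n.cast_nonneg (renewalTail_nonneg hf0 n))
      (natCast_mul_renewalTail_le hf0 hs hmean)
      (tendsto_sum_nat_add fun k : ℕ => ((k + 1 : ℕ) : ℝ) * f (k + 1))
  simpa [sum_range_renewalTail hs] using hmul.add hmean.hasSum.tendsto_sum_nat

lemma nonneg_apply_of_one_le (hf0 : ∀ k, 0 ≤ f (k + 1)) {k : ℕ} (hk : 1 ≤ k) : 0 ≤ f k := by
  simpa [Nat.sub_add_cancel hk] using hf0 (k - 1)

end Tail

lemma abs_sub_sum_range_le {r u : ℕ → ℝ} {a m : ℝ} (hr0 : ∀ k, 0 ≤ r k) (hr : HasSum r m)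
    (hu : ∀ n, |u n| ≤ 1) (hconv : ∀ n, ∑ k ∈ range (n + 1), r k * u (n - k) = a)
    {K n : ℕ} (hKn : K ≤ n + 1) :
    |a - ∑ k ∈ range K, r k * u (n - k)| ≤ m - ∑ k ∈ range K, r k := by
  rw [← hconv n, ← sum_range_add_sum_Ico _ hKn, add_sub_cancel_left]
  calc |∑ k ∈ Ico K (n + 1), r k * u (n - k)|
      ≤ ∑ k ∈ Ico K (n + 1), r k := by
        refine (abs_sum_le_sum_abs _ _).trans (sum_le_sum fun k _ => ?_)
        rw [abs_mul, abs_of_nonneg (hr0 k)]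
        exact mul_le_of_le_one_right (hr0 k) (hu _)
    _ = ∑ k ∈ range (n + 1), r k - ∑ k ∈ range K, r k := by
        rw [← sum_range_add_sum_Ico _ hKn]; ring
    _ ≤ m - ∑ k ∈ range K, r k := by
        gcongr; exact sum_le_hasSum _ (fun k _ => hr0 k) hr

lemma mul_eq_of_tendsto_comp_sub {r u : ℕ → ℝ} {a m c : ℝ} (hr0 : ∀ k, 0 ≤ r k)
    (hr : HasSum r m) (hu : ∀ n, |u n| ≤ 1)
    (hconv : ∀ n, ∑ k ∈ range (n + 1), r k * u (n - k) = a) {φ : ℕ → ℕ}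
    (hφ : Tendsto φ atTop atTop) (hc : ∀ k, Tendsto (fun i => u (φ i - k)) atTop (𝓝 c)) :
    c * m = a := by
  have hK : ∀ K, |a - (∑ k ∈ range K, r k) * c| ≤ m - ∑ k ∈ range K, r k := by
    intro K
    have hlim : Tendsto (fun i => |a - ∑ k ∈ range K, r k * u (φ i - k)|) atTop
        (𝓝 |a - (∑ k ∈ range K, r k) * c|) := by
      rw [sum_mul]
      exact (tendsto_const_nhds.sub (tendsto_finsetSum _ fun k _ => (hc k).const_mul _)).abs
    refine le_of_tendsto hlim ?_
    filter_upwards [hφ.eventually_ge_atTop K] with i hi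
    exact abs_sub_sum_range_le hr0 hr hu hconv (by omega)
  have hS := hr.tendsto_sum_nat
  have h : |a - m * c| ≤ m - m :=
    le_of_tendsto_of_tendsto' ((tendsto_const_nhds.sub (hS.mul_const c)).abs)
      (tendsto_const_nhds.sub hS) hK
  rw [sub_self, abs_nonpos_iff, sub_eq_zero] at h
  rw [h, mul_comm]

def SolvesRenewal (f g : ℕ → ℝ) : Prop :=
  ∀ n : ℕ, 1 ≤ n → g n = ∑ k ∈ Icc 1 n, f k * g (n - k)

namespace SolvesRenewal

variable {f g : ℕ → ℝ}

lemma neg (hg : SolvesRenewal f g) : SolvesRenewal f (-g) := fun n hn => by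
  simp [hg n hn]

lemma abs_le_abs_zero (hg : SolvesRenewal f g) (hf0 : ∀ k, 0 ≤ f (k + 1))
    (hf : HasSum (fun k => f (k + 1)) 1) (n : ℕ) : |g n| ≤ |g 0| := by
  induction n using Nat.strong_induction_on with
  | _ n ih =>
    rcases Nat.eq_zero_or_pos n with rfl | hn
    · rfl
    have hmass : ∑ k ∈ Icc 1 n, f k ≤ 1 := by
      have h := sum_Ioc_add_renewalTail hf.summable (Nat.zero_le n)
      rw [renewalTail_zero hf, ← Icc_add_one_left_eq_Ioc, zero_add] at h
      linarith [renewalTail_nonneg hf0 n]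
    calc |g n| ≤ ∑ k ∈ Icc 1 n, f k * |g 0| := by
          rw [hg n hn]
          refine (abs_sum_le_sum_abs _ _).trans (sum_le_sum fun k hk => ?_)
          have hfk := nonneg_apply_of_one_le hf0 (mem_Icc.1 hk).1
          rw [abs_mul, abs_of_nonneg hfk]
          exact mul_le_mul_of_nonneg_left (ih _ (by grind)) hfk
      _ ≤ |g 0| := by
          rw [← sum_mul]
          exact mul_le_of_le_one_left (abs_nonneg _) hmass

lemma sum_range_renewalTail_mul (hg : SolvesRenewal f g) (hf : HasSum (fun k => f (k + 1)) 1)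
    (n : ℕ) : ∑ k ∈ range (n + 1), renewalTail f k * g (n - k) = g 0 := by
  induction n with
  | zero => simp [renewalTail_zero hf]
  | succ n ih =>
    have hrec : g (n + 1) = ∑ k ∈ range (n + 1), f (k + 1) * g (n - k) := by
      rw [hg (n + 1) n.succ_pos, ← Ico_add_one_right_eq_Icc, sum_Ico_eq_sum_range,
        Nat.add_sub_cancel]
      exact sum_congr rfl fun k _ => by rw [add_comm 1 k]; congr 2; omega
    rw [sum_range_succ', renewalTail_zero hf, Nat.sub_zero, one_mul]
    simp only [renewalTail_succ hf.summable, Nat.add_sub_add_right, sub_mul, sum_sub_distrib, ih,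
      ← hrec]
    ring

lemma sub_le_mul_apply_sub_one (hg : SolvesRenewal f g) (hf0 : ∀ k, 0 ≤ f (k + 1))
    (hf : HasSum (fun k => f (k + 1)) 1) (hbdd : ∀ n, |g n| ≤ 1) {K n : ℕ} (hK : 1 ≤ K)
    (hKn : K ≤ n) {b : ℝ} (hb : ∀ k ∈ Ioc 1 K, g (n - k) ≤ b) :
    g n - (1 - f 1 - renewalTail f K) * b - renewalTail f K ≤ f 1 * g (n - 1) := by
  have hs := hf.summable
  have hsplit : g n = f 1 * g (n - 1) + ∑ k ∈ Ioc 1 K, f k * g (n - k) +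
      ∑ k ∈ Ioc K n, f k * g (n - k) := by
    rw [hg n (by omega), Icc_eq_cons_Ioc (by omega), sum_cons, ← sum_Ioc_consecutive _ hK hKn,
      add_assoc]
  have hmid : ∑ k ∈ Ioc 1 K, f k * g (n - k) ≤ (1 - f 1 - renewalTail f K) * b := by
    have h1 : renewalTail f 1 = 1 - f 1 := by
      simpa [renewalTail_zero hf] using renewalTail_succ hs 0
    have hmass := sum_Ioc_add_renewalTail hs hK
    calc ∑ k ∈ Ioc 1 K, f k * g (n - k) ≤ ∑ k ∈ Ioc 1 K, f k * b :=
          sum_le_sum fun k hk =>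
            mul_le_mul_of_nonneg_left (hb k hk) (nonneg_apply_of_one_le hf0 (mem_Ioc.1 hk).1.le)
      _ = (1 - f 1 - renewalTail f K) * b := by rw [← sum_mul]; congr 1; linarith
  have htail : ∑ k ∈ Ioc K n, f k * g (n - k) ≤ renewalTail f K := by
    calc ∑ k ∈ Ioc K n, f k * g (n - k) ≤ ∑ k ∈ Ioc K n, f k :=
          sum_le_sum fun k hk => mul_le_of_le_one_right (nonneg_apply_of_one_le hf0 (by grind))
            (abs_le.1 (hbdd _)).2
      _ ≤ renewalTail f K := by
          linarith [sum_Ioc_add_renewalTail hs hKn, renewalTail_nonneg hf0 n]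
  linarith

lemma tendsto_comp_sub_one (hg : SolvesRenewal f g) (hf0 : ∀ k, 0 ≤ f (k + 1))
    (hf : HasSum (fun k => f (k + 1)) 1) (hf1 : 0 < f 1) (hbdd : ∀ n, |g n| ≤ 1) {c : ℝ}
    (hub : ∀ a, c < a → ∀ᶠ n in atTop, g n < a) {φ : ℕ → ℕ} (hφ : Tendsto φ atTop atTop)
    (hc : Tendsto (fun i => g (φ i)) atTop (𝓝 c)) :
    Tendsto (fun i => g (φ i - 1)) atTop (𝓝 c) := by
  have hc1 : |c| ≤ 1 := le_of_tendsto' hc.abs fun i => hbdd _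
  refine tendsto_order.2 ⟨fun a ha => ?_, fun a ha =>
    ((tendsto_sub_atTop_nat 1).comp hφ).eventually (hub a ha)⟩
  set δ := f 1 * (c - a) / 4 with hδ
  have hδ0 : 0 < δ := by have := sub_pos.2 ha; positivity
  obtain ⟨K, hK1, hKδ⟩ : ∃ K, 1 ≤ K ∧ renewalTail f K ≤ δ :=
    ((eventually_ge_atTop 1).and ((tendsto_renewalTail f).eventually_le_const hδ0)).exists
  obtain ⟨N, hN⟩ := eventually_atTop.1 (hub (c + δ) (by linarith))
  filter_upwards [hφ.eventually_ge_atTop (N + K),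
    hc.eventually (eventually_gt_nhds (by linarith : c - δ < c))] with i hi hgi
  have key := hg.sub_le_mul_apply_sub_one hf0 hf hbdd hK1 (n := φ i) (by omega) (b := c + δ)
    fun k hk => (hN _ (by grind)).le
  have hr0 := renewalTail_nonneg hf0 K
  -- `f 1 * g (φ i - 1) > (c - δ) - (1 - f 1) * (c + δ) - 2 * renewalTail f K ≥ f 1 * c - 4 * δ`
  have : f 1 * a < f 1 * g (φ i - 1) := by
    nlinarith [mul_nonneg hr0 (by linarith [abs_le.1 hc1] : 0 ≤ c + 1 + δ), mul_pos hf1 hδ0]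
  exact lt_of_mul_lt_mul_left this hf1.le

lemma tendsto_comp_sub (hg : SolvesRenewal f g) (hf0 : ∀ k, 0 ≤ f (k + 1))
    (hf : HasSum (fun k => f (k + 1)) 1) (hf1 : 0 < f 1) (hbdd : ∀ n, |g n| ≤ 1) {c : ℝ}
    (hub : ∀ a, c < a → ∀ᶠ n in atTop, g n < a) {φ : ℕ → ℕ} (hφ : Tendsto φ atTop atTop)
    (hc : Tendsto (fun i => g (φ i)) atTop (𝓝 c)) (k : ℕ) :
    Tendsto (fun i => g (φ i - k)) atTop (𝓝 c) := by
  induction k with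
  | zero => simpa using hc
  | succ k ih =>
    simpa [Nat.sub_sub] using
      hg.tendsto_comp_sub_one hf0 hf hf1 hbdd hub ((tendsto_sub_atTop_nat k).comp hφ) ih

lemma eventually_lt (hg : SolvesRenewal f g) (hf0 : ∀ k, 0 ≤ f (k + 1))
    (hf : HasSum (fun k => f (k + 1)) 1) (hf1 : 0 < f 1) (hbdd : ∀ n, |g n| ≤ 1) {m : ℝ}
    (hr : HasSum (renewalTail f) m) {a : ℝ} (ha : g 0 / m < a) : ∀ᶠ n in atTop, g n < a := by
  have hbddAbove : IsBoundedUnder (· ≤ ·) atTop g :=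
    isBoundedUnder_of ⟨1, fun n => (abs_le.1 (hbdd n)).2⟩
  have hbddBelow : IsBoundedUnder (· ≥ ·) atTop g :=
    isBoundedUnder_of ⟨-1, fun n => (abs_le.1 (hbdd n)).1⟩
  have hub : ∀ a, limsup g atTop < a → ∀ᶠ n in atTop, g n < a :=
    fun a ha => eventually_lt_of_limsup_lt ha hbddAbove
  obtain ⟨φ, hgφ, hφ⟩ := exists_seq_tendsto_limsup hbddBelow.isCobounded_le hbddAbove
  have hm : 0 < m := by
    have := le_hasSum hr 0 fun k _ => renewalTail_nonneg hf0 k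
    linarith [renewalTail_zero hf]
  have hlimsup : limsup g atTop * m = g 0 :=
    mul_eq_of_tendsto_comp_sub (renewalTail_nonneg hf0) hr hbdd (hg.sum_range_renewalTail_mul hf)
      hφ (hg.tendsto_comp_sub hf0 hf hf1 hbdd hub hφ hgφ)
  exact hub a (by rwa [eq_div_of_mul_eq hm.ne' hlimsup])

end SolvesRenewal

theorem renewal_theorem
    (f g : ℕ → ℝ) (m : ℝ)
    (hf0 : ∀ k : ℕ, 0 ≤ f (k + 1))
    (hfsum : ∑' k : ℕ, f (k + 1) = 1)
    (hmean : Summable (fun k : ℕ => ((k + 1 : ℕ) : ℝ) * f (k + 1)))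
    (hm : m = ∑' k : ℕ, ((k + 1 : ℕ) : ℝ) * f (k + 1))
    (hf1 : 0 < f 1)
    (hg0 : g 0 = 1)
    (hg : ∀ n : ℕ, 1 ≤ n → g n = ∑ k ∈ Finset.Icc 1 n, f k * g (n - k)) :
    Filter.Tendsto g Filter.atTop (nhds (1 / m)) := by
  have hsol : SolvesRenewal f g := hg
  have hs : Summable fun k => f (k + 1) :=
    hmean.of_nonneg_of_le hf0 fun k => le_mul_of_one_le_left (hf0 k) (by simp)
  have hf : HasSum (fun k => f (k + 1)) 1 := hfsum ▸ hs.hasSum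
  have hr : HasSum (renewalTail f) m := hm ▸ hasSum_renewalTail hf0 hs hmean
  have hbdd : ∀ n, |g n| ≤ 1 := by simpa [hg0] using hsol.abs_le_abs_zero hf0 hf
  refine tendsto_order.2 ⟨fun a ha => ?_, fun a ha => ?_⟩
  · have hneg := hsol.neg.eventually_lt hf0 hf hf1 (by simpa using hbdd) hr (a := -a)
      (by rw [Pi.neg_apply, hg0, neg_div, neg_lt_neg_iff]; exact ha)
    filter_upwards [hneg] with n hn
    simpa using hn
  · exact hsol.eventually_lt hf0 hf hf1 hbdd hr (by rwa [hg0])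
end
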